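/- arXiv:math/0211312 — 6 statements merged into one kernel-verified Lean document; each statement's English description precedes it below -/
import Mathlib

section
/- Let G be a discrete group, let H be a complex Hilbert space decomposed as the orthogonal direct sum of subspaces H_g indexed by g ∈ G (via pairwise orthogonal projections P_g with ∑_{g∈G} P_g = I strongly), let K be a complex Hilbert space, let c ≥ 0, and let ξ, η : G → K satisfy ‖ξ(g)‖ ≤ √c and ‖η(g)‖ ≤ √c for all g ∈ G. Suppose φ : G → ℂ satisfies φ(st⁻¹) = ⟨ξ(t), η(s)⟩ for all s, t ∈ G. Then for every bounded operator x on H there exists a unique bounded operator Λ_s(x) on H with P_s Λ_s(x) P_t = φ(st⁻¹) · (P_s x P_t) for all s, t ∈ G, and ‖Λ_s(x)‖ ≤ c · ‖x‖. -/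
/-!
Choose a Hilbert basis of `K`, so that `ℓ²(κ, H)` plays the role of `H ⊗ K̄`. Because the blocks
`H_t` are mutually orthogonal, `v ↦ v ⊗ ξ(t)` on `H_t` assembles into an operator
`A : H → ℓ²(κ, H)` of norm at most `√c`, and similarly `B` from `η`. Then `y = B* (x ⊗ 1) A` has
norm at most `c ‖x‖`, and its `(s, t)` block is `⟪ξ t, η s⟫ • P_s x P_t` since
`⟪w ⊗ η(s), x v ⊗ ξ(t)⟫ = ⟪ξ t, η s⟫ ⟪w, x v⟫`. Uniqueness holds because `∑ P_g = 1` strongly, so an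
operator is determined by its blocks.
-/

open scoped InnerProductSpace lp

section

variable {ι κ 𝕜 E F H K : Type*} [RCLike 𝕜]
  [NormedAddCommGroup E] [InnerProductSpace 𝕜 E] [NormedAddCommGroup F] [InnerProductSpace 𝕜 F]
  [NormedAddCommGroup H] [InnerProductSpace 𝕜 H] [NormedAddCommGroup K] [InnerProductSpace 𝕜 K]

theorem orthogonalFamily_span_singleton {u : ι → E} (h : Pairwise fun i j => ⟪u i, u j⟫_𝕜 = 0) :
    OrthogonalFamily 𝕜 (fun i => Submodule.span 𝕜 {u i})
      fun i => (Submodule.span 𝕜 {u i}).subtypeₗᵢ :=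
  OrthogonalFamily.of_pairwise fun _ _ hij => Submodule.isOrtho_span.2 fun _ hv _ hw => by
    rw [Set.mem_singleton_iff.1 hv, Set.mem_singleton_iff.1 hw]
    exact h hij

theorem summable_of_pairwise_inner_eq_zero [CompleteSpace E] {u : ι → E}
    (h : Pairwise fun i j => ⟪u i, u j⟫_𝕜 = 0) (hu : Summable fun i => ‖u i‖ ^ 2) : Summable u :=
  ((orthogonalFamily_span_singleton h).summable_iff_norm_sq_summable
    fun i => ⟨u i, Submodule.mem_span_singleton_self _⟩).2 hu

theorem HasSum.norm_sq_of_pairwise_inner_eq_zero {u : ι → E} {S : E}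
    (h : Pairwise fun i j => ⟪u i, u j⟫_𝕜 = 0) (hu : HasSum u S) :
    HasSum (fun i => ‖u i‖ ^ 2) (‖S‖ ^ 2) := by
  have hpythagoras (s : Finset ι) : ‖∑ i ∈ s, u i‖ ^ 2 = ∑ i ∈ s, ‖u i‖ ^ 2 :=
    (orthogonalFamily_span_singleton h).norm_sum
      (fun i => ⟨u i, Submodule.mem_span_singleton_self _⟩) s
  exact (hu.norm.pow 2).congr hpythagoras

theorem ContinuousLinearMap.exists_hasSum_of_pairwise_inner_eq_zero [CompleteSpace F]
    (T : ι → E →L[𝕜] F) (horth : Pairwise fun i j => ∀ u w, ⟪T i u, T j w⟫_𝕜 = 0)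
    {C : ℝ} (hC : 0 ≤ C) (hbound : ∀ v (s : Finset ι), ∑ i ∈ s, ‖T i v‖ ^ 2 ≤ C ^ 2 * ‖v‖ ^ 2) :
    ∃ S : E →L[𝕜] F, ‖S‖ ≤ C ∧ ∀ v, HasSum (fun i => T i v) (S v) := by
  have hsum (v : E) : HasSum (fun i => T i v) (∑' i, T i v) :=
    (summable_of_pairwise_inner_eq_zero (fun i j hij => horth hij v v)
      (summable_of_sum_le (fun _ => by positivity) (hbound v))).hasSum
  let S : E →ₗ[𝕜] F :=
    { toFun v := ∑' i, T i v
      map_add' v w := by simpa only [map_add] using ((hsum v).add (hsum w)).tsum_eq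
      map_smul' a v := by
        simpa only [map_smul, RingHom.id_apply] using ((hsum v).const_smul a).tsum_eq }
  have hS (v : E) : ‖S v‖ ≤ C * ‖v‖ := by
    change ‖∑' i, T i v‖ ≤ C * ‖v‖
    refine le_of_sq_le_sq ?_ (by positivity)
    rw [mul_pow,
      ← ((hsum v).norm_sq_of_pairwise_inner_eq_zero fun i j hij => horth hij v v).tsum_eq]
    exact tsum_le_of_sum_le' (by positivity) (hbound v)
  exact ⟨S.mkContinuous C hS, S.mkContinuous_norm_le hC hS, hsum⟩

theorem ContinuousLinearMap.eq_of_forall_comp_comp_eq {R M : Type*} [Semiring R]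
    [AddCommMonoid M] [Module R M] [TopologicalSpace M] [T2Space M] {P : ι → M →L[R] M}
    (hP : ∀ v, HasSum (fun i => P i v) v) {y z : M →L[R] M}
    (h : ∀ s t, (P s).comp (y.comp (P t)) = (P s).comp (z.comp (P t))) : y = z := by
  ext v
  have hcol (t : ι) : y (P t v) = z (P t v) := by
    refine (hP _).unique ?_
    rw [show (fun s => P s (y (P t v))) = fun s => P s (z (P t v)) from
      funext fun s => congr($(h s t) v)]
    exact hP _
  refine ((hP v).map y y.continuous).unique ?_
  simpa only [Function.comp_def, hcol] using (hP v).map z z.continuous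

namespace lp

theorem inner_single_single_of_ne [DecidableEq ι] {i j : ι} (hij : i ≠ j) (a b : H) :
    ⟪(lp.single 2 i a : ℓ²(ι, H)), lp.single 2 j b⟫_𝕜 = 0 := by
  rw [lp.inner_single_left, lp.single_apply_ne _ _ _ hij, inner_zero_right]

theorem apply_eq_of_hasSum_single [DecidableEq ι] {V : ι → Type*}
    [∀ i, NormedAddCommGroup (V i)] {p : ENNReal} [Fact (1 ≤ p)] {f : ∀ i, V i} {g : lp V p}
    (hg : HasSum (fun i => lp.single p i (f i)) g) (j : ι) : g j = f j := by
  have := Pi.hasSum.1 (hg.map (lp.coeFnAddMonoidHom V p) lp.uniformContinuous_coe.continuous) j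
  simp only [Function.comp_apply, coeFnAddMonoidHom_apply, lp.single_apply] at this
  simpa only [Pi.single_eq_same] using
    this.unique (hasSum_single j fun i hij => Pi.single_eq_of_ne' hij (f i))

theorem hasSum_norm_sq (f : ℓ²(ι, H)) : HasSum (fun i => ‖f i‖ ^ 2) (‖f‖ ^ 2) := by
  simpa only [ENNReal.toReal_ofNat, Real.rpow_ofNat] using lp.hasSum_norm (p := 2) (by norm_num) f

end lp

theorem HilbertBasis.inner_eq_mul_inner_of_apply_eq_smul (b : HilbertBasis κ 𝕜 K) {k k' : K}
    {u u' : H} {f g : ℓ²(κ, H)} (hf : ∀ i, f i = ⟪k, b i⟫_𝕜 • u)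
    (hg : ∀ i, g i = ⟪k', b i⟫_𝕜 • u') :
    ⟪f, g⟫_𝕜 = ⟪k', k⟫_𝕜 * ⟪u, u'⟫_𝕜 := by
  have hfg (i : κ) : ⟪f i, g i⟫_𝕜 = ⟪k', b i⟫_𝕜 * ⟪b i, k⟫_𝕜 * ⟪u, u'⟫_𝕜 := by
    rw [hf, hg, inner_smul_left, inner_smul_right, inner_conj_symm]
    ring
  have h := lp.hasSum_inner (𝕜 := 𝕜) f g
  simp only [hfg] at h
  exact h.unique ((b.hasSum_inner_mul_inner k' k).mul_right _)

variable [CompleteSpace H]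

theorem HilbertBasis.exists_tensor (b : HilbertBasis κ 𝕜 K) (k : K) :
    ∃ A : H →L[𝕜] ℓ²(κ, H), ‖A‖ ≤ ‖k‖ ∧ ∀ u i, A u i = ⟪k, b i⟫_𝕜 • u := by
  classical
  obtain ⟨A, hA, hsum⟩ := ContinuousLinearMap.exists_hasSum_of_pairwise_inner_eq_zero
    (fun i => ⟪k, b i⟫_𝕜 • (lp.singleContinuousLinearMap 𝕜 (fun _ => H) 2 i))
    (fun i j hij u w => by
      simpa only [smul_apply, lp.singleContinuousLinearMap_apply, ← lp.single_smul] using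
        lp.inner_single_single_of_ne hij _ _)
    (norm_nonneg k)
    fun u s => by
      simp only [smul_apply, lp.singleContinuousLinearMap_apply, norm_smul,
        lp.norm_single (p := 2) (by norm_num), mul_pow, ← Finset.sum_mul]
      gcongr
      simpa only [norm_inner_symm] using b.orthonormal.sum_inner_products_le k
  refine ⟨A, hA, fun u => lp.apply_eq_of_hasSum_single ?_⟩
  simpa only [smul_apply, lp.singleContinuousLinearMap_apply, ← lp.single_smul] using hsum u

theorem ContinuousLinearMap.exists_ampliation (x : H →L[𝕜] H) :
    ∃ X : ℓ²(κ, H) →L[𝕜] ℓ²(κ, H), ‖X‖ ≤ ‖x‖ ∧ ∀ f i, X f i = x (f i) := by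
  classical
  obtain ⟨X, hX, hsum⟩ := ContinuousLinearMap.exists_hasSum_of_pairwise_inner_eq_zero
    (fun i : κ => (lp.singleContinuousLinearMap 𝕜 (fun _ => H) 2 i).comp
      (x.comp (lp.evalCLM 𝕜 (fun _ => H) 2 i)))
    (fun i j hij u w => lp.inner_single_single_of_ne (H := H) hij _ _) (norm_nonneg x)
    fun f s => by
      simp only [ContinuousLinearMap.comp_apply, lp.singleContinuousLinearMap_apply,
        lp.norm_single (p := 2) (by norm_num)]
      calc ∑ i ∈ s, ‖x (f i)‖ ^ 2 ≤ ∑ i ∈ s, ‖x‖ ^ 2 * ‖f i‖ ^ 2 := by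
            gcongr with i
            rw [← mul_pow]
            gcongr
            exact x.le_opNorm _
        _ ≤ ‖x‖ ^ 2 * ‖f‖ ^ 2 := by
          rw [← Finset.mul_sum]
          gcongr
          exact sum_le_hasSum s (fun _ _ => by positivity) (lp.hasSum_norm_sq f)
  exact ⟨X, hX, fun f => lp.apply_eq_of_hasSum_single (hsum f)⟩

structure IsOrthogonalDecomposition (P : ι → H →L[𝕜] H) : Prop where
  isSelfAdjoint (i : ι) : IsSelfAdjoint (P i)
  comp_self (i : ι) : (P i).comp (P i) = P i
  comp_eq_zero : Pairwise fun i j => (P i).comp (P j) = 0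
  hasSum (v : H) : HasSum (fun i => P i v) v

namespace IsOrthogonalDecomposition

open ContinuousLinearMap

variable {P : ι → H →L[𝕜] H}

theorem apply_apply_self (hP : IsOrthogonalDecomposition P) (i : ι) (v : H) :
    P i (P i v) = P i v :=
  congr($(hP.comp_self i) v)

theorem apply_apply_of_ne (hP : IsOrthogonalDecomposition P) {i j : ι} (hij : i ≠ j) (v : H) :
    P i (P j v) = 0 :=
  congr($(hP.comp_eq_zero hij) v)

theorem inner_apply_left (hP : IsOrthogonalDecomposition P) (i : ι) (u w : H) :
    ⟪P i u, w⟫_𝕜 = ⟪u, P i w⟫_𝕜 :=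
  (hP.isSelfAdjoint i).isSymmetric u w

theorem inner_apply_apply_of_ne (hP : IsOrthogonalDecomposition P) {i j : ι} (hij : i ≠ j)
    (u w : H) : ⟪P i u, P j w⟫_𝕜 = 0 := by
  rw [hP.inner_apply_left, hP.apply_apply_of_ne hij, inner_zero_right]

theorem hasSum_norm_sq (hP : IsOrthogonalDecomposition P) (v : H) :
    HasSum (fun i => ‖P i v‖ ^ 2) (‖v‖ ^ 2) :=
  (hP.hasSum v).norm_sq_of_pairwise_inner_eq_zero fun _ _ hij => hP.inner_apply_apply_of_ne hij v v

theorem exists_tensor_embedding (hP : IsOrthogonalDecomposition P)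
    (b : HilbertBasis κ 𝕜 K) (ξ : ι → K) {a : ℝ} (ha₀ : 0 ≤ a) (ha : ∀ i, ‖ξ i‖ ≤ a) :
    ∃ A : H →L[𝕜] ℓ²(κ, H), ‖A‖ ≤ a ∧ ∀ t v j, A (P t v) j = ⟪ξ t, b j⟫_𝕜 • P t v := by
  choose E hE hE_apply using fun t => b.exists_tensor (H := H) (ξ t)
  obtain ⟨A, hA, hsum⟩ := exists_hasSum_of_pairwise_inner_eq_zero (fun t => (E t).comp (P t))
    (fun s t hst u w => by
      rw [comp_apply, comp_apply, b.inner_eq_mul_inner_of_apply_eq_smul (hE_apply s _)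
        (hE_apply t _), hP.inner_apply_apply_of_ne hst, mul_zero])
    ha₀ fun v s => calc
      ∑ t ∈ s, ‖E t (P t v)‖ ^ 2 ≤ ∑ t ∈ s, a ^ 2 * ‖P t v‖ ^ 2 := by
        gcongr with t
        rw [← mul_pow]
        gcongr
        exact (E t).le_of_opNorm_le ((hE t).trans (ha t)) _
      _ ≤ a ^ 2 * ‖v‖ ^ 2 := by
        rw [← Finset.mul_sum]
        gcongr
        exact sum_le_hasSum s (fun _ _ => by positivity) (hP.hasSum_norm_sq v)
  refine ⟨A, hA, fun t v j => ?_⟩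
  have hA_apply : A (P t v) = E t (P t v) := by
    rw [(hsum (P t v)).unique (hasSum_single t fun s hst => by
      rw [comp_apply, hP.apply_apply_of_ne hst, map_zero])]
    rw [comp_apply, hP.apply_apply_self]
  rw [hA_apply, hE_apply]

theorem exists_schurMultiplier [CompleteSpace K]
    (hP : IsOrthogonalDecomposition P) (ξ η : ι → K) {a b : ℝ} (ha₀ : 0 ≤ a) (hb₀ : 0 ≤ b)
    (ha : ∀ i, ‖ξ i‖ ≤ a) (hb : ∀ i, ‖η i‖ ≤ b) (x : H →L[𝕜] H) :
    ∃ y : H →L[𝕜] H, ‖y‖ ≤ a * b * ‖x‖ ∧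
      ∀ s t, (P s).comp (y.comp (P t)) = ⟪ξ t, η s⟫_𝕜 • (P s).comp (x.comp (P t)) := by
  obtain ⟨κ, e, -⟩ := exists_hilbertBasis 𝕜 K
  obtain ⟨A, hA, hA_apply⟩ := hP.exists_tensor_embedding e ξ ha₀ ha
  obtain ⟨B, hB, hB_apply⟩ := hP.exists_tensor_embedding e η hb₀ hb
  obtain ⟨X, hX, hX_apply⟩ := x.exists_ampliation (κ := κ)
  refine ⟨adjoint B ∘L X ∘L A, ?_, fun s t => ?_⟩
  · calc ‖adjoint B ∘L X ∘L A‖ ≤ ‖adjoint B‖ * (‖X‖ * ‖A‖) :=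
          (opNorm_comp_le _ _).trans (by gcongr; exact opNorm_comp_le _ _)
      _ ≤ b * (‖x‖ * a) := by rw [adjoint.norm_map]; gcongr
      _ = a * b * ‖x‖ := by ring
  · ext v
    refine ext_inner_left 𝕜 fun w => ?_
    simp only [comp_apply, smul_apply, inner_smul_right, ← hP.inner_apply_left, adjoint_inner_right]
    exact e.inner_eq_mul_inner_of_apply_eq_smul (hB_apply s w) fun j => by
      rw [hX_apply, hA_apply, map_smul]

end IsOrthogonalDecomposition

end

/-- Existence, uniqueness and norm bound for the Schur multiplier
associated to a function `φ(st⁻¹) = ⟨ξ(t), η(s)⟩` with `‖ξ(g)‖, ‖η(g)‖ ≤ √c`. -/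
theorem schur_multiplier_of_inner_product_representation
    (G : Type*) [Group G]
    (H : Type*) [NormedAddCommGroup H] [InnerProductSpace ℂ H] [CompleteSpace H]
    (K : Type*) [NormedAddCommGroup K] [InnerProductSpace ℂ K] [CompleteSpace K]
    (P : G → H →L[ℂ] H)
    (hPsa : ∀ g, IsSelfAdjoint (P g))
    (hPidem : ∀ g, (P g).comp (P g) = P g)
    (hPorth : ∀ g h : G, g ≠ h → (P g).comp (P h) = 0)
    (hPsum : ∀ v : H, HasSum (fun g => P g v) v)
    (c : ℝ) (hc : 0 ≤ c)
    (ξ η : G → K)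
    (hξ : ∀ g, ‖ξ g‖ ≤ Real.sqrt c) (hη : ∀ g, ‖η g‖ ≤ Real.sqrt c)
    (φ : G → ℂ)
    (hφ : ∀ s t : G, φ (s * t⁻¹) = ⟪ξ t, η s⟫_ℂ)
    (x : H →L[ℂ] H) :
    ∃ y : H →L[ℂ] H,
      (∀ s t : G, (P s).comp (y.comp (P t)) = φ (s * t⁻¹) • ((P s).comp (x.comp (P t)))) ∧
      ‖y‖ ≤ c * ‖x‖ ∧
      ∀ z : H →L[ℂ] H,
        (∀ s t : G, (P s).comp (z.comp (P t)) = φ (s * t⁻¹) • ((P s).comp (x.comp (P t)))) →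
        z = y := by
  have hP : IsOrthogonalDecomposition P := ⟨hPsa, hPidem, hPorth, hPsum⟩
  obtain ⟨y, hy, hy_blocks⟩ := hP.exists_schurMultiplier ξ η (Real.sqrt_nonneg c)
    (Real.sqrt_nonneg c) hξ hη x
  simp only [← hφ] at hy_blocks
  refine ⟨y, hy_blocks, by rwa [Real.mul_self_sqrt hc] at hy, fun z hz => ?_⟩
  exact ContinuousLinearMap.eq_of_forall_comp_comp_eq hPsum fun s t =>
    (hz s t).trans (hy_blocks s t).symm
end

section
/- Let G be a discrete abelian group and φ ∈ ℓ²(G). Then for every complex Hilbert space H decomposed as the orthogonal direct sum of subspaces H_g indexed by g ∈ G (via pairwise orthogonal projections P_g with ∑_{g∈G} P_g = I strongly) and every bounded operator x on H, there exists a unique bounded operator Λ_s(x) on H with P_s Λ_s(x) P_t = φ(st⁻¹) · (P_s x P_t) for all s, t ∈ G, and ‖Λ_s(x)‖ ≤ ‖φ‖_{ℓ²} · ‖x‖. -/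
set_option linter.unusedSectionVars false

namespace SchurAux

open scoped InnerProductSpace

variable {G : Type*} [CommGroup G]
variable {H : Type*} [NormedAddCommGroup H] [InnerProductSpace ℂ H] [CompleteSpace H]
variable {P : G → H →L[ℂ] H}

lemma apply_idem (hPidem : ∀ g, (P g).comp (P g) = P g) (g : G) (v : H) :
    P g (P g v) = P g v := by
  have := ContinuousLinearMap.ext_iff.mp (hPidem g) v
  simpa using this

lemma apply_orth (hPorth : ∀ g h : G, g ≠ h → (P g).comp (P h) = 0) {g h : G} (hgh : g ≠ h)
    (v : H) : P g (P h v) = 0 := by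
  have := ContinuousLinearMap.ext_iff.mp (hPorth g h hgh) v
  simpa using this

lemma inner_proj_left (hPsa : ∀ g, IsSelfAdjoint (P g)) (g : G) (v w : H) :
    ⟪P g v, w⟫_ℂ = ⟪v, P g w⟫_ℂ := by
  conv_lhs => rw [← (ContinuousLinearMap.isSelfAdjoint_iff'.mp (hPsa g))]
  exact ContinuousLinearMap.adjoint_inner_left (P g) w v

lemma inner_orth (hPsa : ∀ g, IsSelfAdjoint (P g))
    (hPorth : ∀ g h : G, g ≠ h → (P g).comp (P h) = 0) {g h : G} (hgh : g ≠ h) (v w : H) :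
    ⟪P g v, P h w⟫_ℂ = 0 := by
  rw [inner_proj_left hPsa, apply_orth hPorth hgh, inner_zero_right]

lemma inner_self_proj (hPsa : ∀ g, IsSelfAdjoint (P g))
    (hPidem : ∀ g, (P g).comp (P g) = P g) (g : G) (v : H) :
    ⟪v, P g v⟫_ℂ = ⟪P g v, P g v⟫_ℂ := by
  conv_lhs => rw [← apply_idem hPidem g v]
  rw [← inner_proj_left hPsa]

lemma norm_proj_le (hPsa : ∀ g, IsSelfAdjoint (P g))
    (hPidem : ∀ g, (P g).comp (P g) = P g) (g : G) (v : H) : ‖P g v‖ ≤ ‖v‖ := by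
  have h2 : ‖P g v‖ ^ 2 ≤ ‖v‖ * ‖P g v‖ := by
    calc ‖P g v‖ ^ 2 = ‖⟪P g v, P g v⟫_ℂ‖ := by
          rw [inner_self_eq_norm_sq_to_K (𝕜 := ℂ)]; simp [sq_abs]
      _ = ‖⟪v, P g v⟫_ℂ‖ := by rw [inner_self_proj hPsa hPidem]
      _ ≤ ‖v‖ * ‖P g v‖ := norm_inner_le_norm _ _
  rcases eq_or_lt_of_le (norm_nonneg (P g v)) with h | h
  · rw [← h]; exact norm_nonneg v
  · nlinarith

lemma parseval (hPsa : ∀ g, IsSelfAdjoint (P g))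
    (hPidem : ∀ g, (P g).comp (P g) = P g)
    (hPsum : ∀ v : H, HasSum (fun g => P g v) v) (v : H) :
    HasSum (fun g => ‖P g v‖ ^ 2) (‖v‖ ^ 2) := by
  have h1 : HasSum (fun g => ⟪v, P g v⟫_ℂ) ⟪v, v⟫_ℂ := (hPsum v).mapL (innerSL ℂ v)
  rw [← Complex.hasSum_ofReal]
  convert h1 using 2 with g
  · rw [inner_self_proj hPsa hPidem, inner_self_eq_norm_sq_to_K]
    norm_cast
  · rw [inner_self_eq_norm_sq_to_K]
    norm_cast

/-- Summability of a pairwise-orthogonal family with square-summable norms. -/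
lemma summable_of_orth_norm_sq {f : G → H}
    (horth : ∀ g h : G, g ≠ h → ⟪f g, f h⟫_ℂ = 0)
    (hsum : Summable fun g => ‖f g‖ ^ 2) : Summable f := by
  let K : G → Submodule ℂ H := fun g => Submodule.span ℂ {f g}
  have hV : OrthogonalFamily ℂ (fun g => K g) (fun g => (K g).subtypeₗᵢ) := by
    intro i j hij v w
    have hv := v.2
    have hw := w.2
    rw [Submodule.mem_span_singleton] at hv hw
    obtain ⟨a, ha⟩ := hv
    obtain ⟨b, hb⟩ := hw
    show ⟪(v : H), (w : H)⟫_ℂ = 0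
    rw [← ha, ← hb, inner_smul_left, inner_smul_right, horth i j hij]
    simp
  have hf' : ∀ g, f g ∈ K g := fun g => Submodule.mem_span_singleton_self _
  exact (hV.summable_iff_norm_sq_summable (fun g => ⟨f g, hf' g⟩)).mpr hsum

/-- Norm of a finite sum of pairwise-orthogonal vectors. -/
lemma norm_sum_sq_orth {f : G → H}
    (horth : ∀ g h : G, g ≠ h → ⟪f g, f h⟫_ℂ = 0) (F : Finset G) :
    ‖∑ g ∈ F, f g‖ ^ 2 = ∑ g ∈ F, ‖f g‖ ^ 2 := by
  have : (⟪∑ g ∈ F, f g, ∑ g ∈ F, f g⟫_ℂ) = ∑ g ∈ F, ⟪f g, f g⟫_ℂ := by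
    rw [sum_inner]
    refine Finset.sum_congr rfl fun g hg => ?_
    rw [inner_sum, Finset.sum_eq_single g (fun h hh hne => horth g h (Ne.symm hne) ..)
      (fun h => absurd hg h)]
  simp only [inner_self_eq_norm_sq_to_K] at this
  exact_mod_cast this

/-- Norm bound for the sum of a pairwise orthogonal summable family. -/
lemma norm_tsum_sq_le_orth {f : G → H}
    (horth : ∀ g h : G, g ≠ h → ⟪f g, f h⟫_ℂ = 0) {a : H} (ha : HasSum f a)
    {C : ℝ} (hC : ∀ F : Finset G, ∑ g ∈ F, ‖f g‖ ^ 2 ≤ C) : ‖a‖ ^ 2 ≤ C := by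
  have h1 : Filter.Tendsto (fun F : Finset G => ‖∑ g ∈ F, f g‖ ^ 2) Filter.atTop
      (nhds (‖a‖ ^ 2)) := ((ha.norm).pow 2)
  refine le_of_tendsto h1 (Filter.Eventually.of_forall fun F => ?_)
  rw [norm_sum_sq_orth horth]
  exact hC F

lemma lp_two_summable (φ : lp (fun _ : G => ℂ) 2) : Summable fun g => ‖φ g‖ ^ 2 := by
  have h := (lp.memℓp φ).summable (p := 2) (by norm_num)
  convert h using 2 with g
  rw [show ((2 : ENNReal).toReal) = ((2:ℕ) : ℝ) by norm_num, Real.rpow_natCast]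

lemma lp_two_tsum (φ : lp (fun _ : G => ℂ) 2) : ∑' g, ‖φ g‖ ^ 2 = ‖φ‖ ^ 2 := by
  have h := lp.norm_rpow_eq_tsum (p := 2) (by norm_num) φ
  rw [show ((2 : ENNReal).toReal) = ((2:ℕ) : ℝ) by norm_num] at h
  simp only [Real.rpow_natCast] at h
  exact_mod_cast h.symm

end SchurAux

open SchurAux
open scoped InnerProductSpace

/-- For a discrete abelian group `G` and `φ ∈ ℓ²(G)`, the Schur
multiplier with matrix `(φ(st⁻¹))_{s,t}` exists on any Hilbert space decomposed over
`G`, is unique, and has norm at most `‖φ‖₂ · ‖x‖`. -/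
theorem schur_multiplier_of_l2_function_abelian
    (G : Type*) [CommGroup G]
    (φ : lp (fun _ : G => ℂ) 2)
    (H : Type*) [NormedAddCommGroup H] [InnerProductSpace ℂ H] [CompleteSpace H]
    (P : G → H →L[ℂ] H)
    (hPsa : ∀ g, IsSelfAdjoint (P g))
    (hPidem : ∀ g, (P g).comp (P g) = P g)
    (hPorth : ∀ g h : G, g ≠ h → (P g).comp (P h) = 0)
    (hPsum : ∀ v : H, HasSum (fun g => P g v) v)
    (x : H →L[ℂ] H) :
    ∃ y : H →L[ℂ] H,
      (∀ s t : G, (P s).comp (y.comp (P t)) = φ (s * t⁻¹) • ((P s).comp (x.comp (P t)))) ∧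
      ‖y‖ ≤ ‖φ‖ * ‖x‖ ∧
      ∀ z : H →L[ℂ] H,
        (∀ s t : G, (P s).comp (z.comp (P t)) = φ (s * t⁻¹) • ((P s).comp (x.comp (P t)))) →
        z = y := by
  classical
  -- scalar data
  set b : G → ℝ := fun g => ‖φ g‖ ^ 2 with hb_def
  have hb : Summable b := lp_two_summable φ
  have hbt : ∑' g, b g = ‖φ‖ ^ 2 := lp_two_tsum φ
  have hb_nonneg : ∀ g, 0 ≤ b g := fun g => sq_nonneg _
  -- reindexing: for fixed t, sum over s of b (s * t⁻¹)
  have hshiftL : ∀ t : G, (Summable fun s => b (s * t⁻¹)) ∧ (∑' s, b (s * t⁻¹)) = ‖φ‖ ^ 2 := by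
    intro t
    have he : (fun s => b (s * t⁻¹)) = b ∘ (Equiv.mulRight t⁻¹) := rfl
    constructor
    · rw [he, Equiv.summable_iff]; exact hb
    · rw [he]
      have := (Equiv.mulRight t⁻¹).tsum_eq b
      rw [Function.comp_def]
      simp only [Equiv.coe_mulRight] at this ⊢
      rw [this, hbt]
  -- reindexing: for fixed s, sum over t of b (s * t⁻¹)
  have hshiftR : ∀ s : G, (Summable fun t => b (s * t⁻¹)) ∧ (∑' t, b (s * t⁻¹)) = ‖φ‖ ^ 2 := by
    intro s
    have he : (fun t : G => b (s * t⁻¹)) = b ∘ ((Equiv.inv G).trans (Equiv.mulLeft s)) := rfl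
    constructor
    · rw [he, Equiv.summable_iff]; exact hb
    · rw [he]
      have := ((Equiv.inv G).trans (Equiv.mulLeft s)).tsum_eq b
      rw [Function.comp_def]
      rw [this, hbt]
  -- the matrix entries as vectors
  set w : G → H → G → H := fun s v t => φ (s * t⁻¹) • P t v with hw_def
  have hworth : ∀ (s : G) (v : H) (t t' : G), t ≠ t' → ⟪w s v t, w s v t'⟫_ℂ = 0 := by
    intro s v t t' htt'
    simp only [hw_def, inner_smul_left, inner_smul_right]
    rw [inner_orth hPsa hPorth htt']
    ring
  have hwnorm : ∀ (s : G) (v : H) (t : G), ‖w s v t‖ ^ 2 = b (s * t⁻¹) * ‖P t v‖ ^ 2 := by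
    intro s v t
    simp only [hw_def, norm_smul, mul_pow, hb_def]
  -- the key pointwise estimates
  have key : ∀ v : H,
      (∀ s, HasSum (w s v) (∑' t, w s v t)) ∧
      HasSum (fun s => P s (x (∑' t, w s v t))) (∑' s, P s (x (∑' t, w s v t))) ∧
      ‖∑' s, P s (x (∑' t, w s v t))‖ ≤ ‖φ‖ * ‖x‖ * ‖v‖ := by
    intro v
    have hc : HasSum (fun t => ‖P t v‖ ^ 2) (‖v‖ ^ 2) := parseval hPsa hPidem hPsum v
    set c : G → ℝ := fun t => ‖P t v‖ ^ 2 with hc_def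
    have hc_nonneg : ∀ t, 0 ≤ c t := fun t => sq_nonneg _
    set F : G → G → ℝ := fun s t => b (s * t⁻¹) * c t with hF_def
    have hF_nonneg : ∀ s t, 0 ≤ F s t := fun s t => mul_nonneg (hb_nonneg _) (hc_nonneg _)
    have h1 : ∀ t, Summable fun s => F s t := fun t => ((hshiftL t).1).mul_right (c t)
    have h2 : ∀ t, ∑' s, F s t = ‖φ‖ ^ 2 * c t := by
      intro t
      simp only [hF_def]
      rw [tsum_mul_right, (hshiftL t).2]
    have hfprS : Summable (fun p : G × G => F p.2 p.1) := by
      apply (summable_prod_of_nonneg (fun p => hF_nonneg p.2 p.1)).mpr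
      refine ⟨fun t => h1 t, ?_⟩
      apply Summable.congr ((hc.summable).mul_left (‖φ‖ ^ 2))
      intro t
      rw [h2 t]
    have hswap : Summable (fun p : G × G => F p.1 p.2) := hfprS.prod_symm
    have hFs : ∀ s, Summable fun t => F s t := fun s => hswap.prod_factor s
    have hDsum : Summable fun s => ∑' t, F s t :=
      ((summable_prod_of_nonneg (fun p => hF_nonneg p.1 p.2)).mp hswap).2
    have hDtot : ∑' s, ∑' t, F s t = ‖φ‖ ^ 2 * ‖v‖ ^ 2 := by
      rw [← Summable.tsum_prod' hswap hFs]
      have e1 : ∑' p : G × G, F p.1 p.2 = ∑' p : G × G, F p.2 p.1 :=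
        (Equiv.prodComm G G).tsum_eq (fun p : G × G => F p.2 p.1)
      rw [e1, Summable.tsum_prod' hfprS h1]
      calc ∑' t, ∑' s, F s t = ∑' t, ‖φ‖ ^ 2 * c t := by
            exact tsum_congr fun t => h2 t
        _ = ‖φ‖ ^ 2 * ∑' t, c t := tsum_mul_left
        _ = ‖φ‖ ^ 2 * ‖v‖ ^ 2 := by rw [hc.tsum_eq]
    have hws : ∀ s, Summable (w s v) := by
      intro s
      apply summable_of_orth_norm_sq (hworth s v)
      apply Summable.congr (hFs s)
      intro t
      rw [hwnorm]
    have hu : ∀ s, HasSum (w s v) (∑' t, w s v t) := fun s => (hws s).hasSum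
    have hu_norm : ∀ s, ‖∑' t, w s v t‖ ^ 2 ≤ ∑' t, F s t := by
      intro s
      apply norm_tsum_sq_le_orth (hworth s v) (hu s)
      intro Fin
      calc ∑ t ∈ Fin, ‖w s v t‖ ^ 2 = ∑ t ∈ Fin, F s t :=
            Finset.sum_congr rfl fun t _ => hwnorm s v t
        _ ≤ ∑' t, F s t := Summable.sum_le_tsum Fin (fun t _ => hF_nonneg s t) (hFs s)
    set z : G → H := fun s => P s (x (∑' t, w s v t)) with hz_def
    have hzorth : ∀ s s' : G, s ≠ s' → ⟪z s, z s'⟫_ℂ = 0 := fun s s' hss' =>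
      inner_orth hPsa hPorth hss' _ _
    have hznorm : ∀ s, ‖z s‖ ^ 2 ≤ ‖x‖ ^ 2 * ∑' t, F s t := by
      intro s
      have h3 : ‖z s‖ ≤ ‖x‖ * ‖∑' t, w s v t‖ :=
        le_trans (norm_proj_le hPsa hPidem s _) (x.le_opNorm _)
      calc ‖z s‖ ^ 2 ≤ (‖x‖ * ‖∑' t, w s v t‖) ^ 2 :=
            pow_le_pow_left₀ (norm_nonneg _) h3 2
        _ = ‖x‖ ^ 2 * ‖∑' t, w s v t‖ ^ 2 := by ring
        _ ≤ ‖x‖ ^ 2 * ∑' t, F s t :=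
            mul_le_mul_of_nonneg_left (hu_norm s) (sq_nonneg _)
    have hzsum2 : Summable fun s => ‖z s‖ ^ 2 :=
      Summable.of_nonneg_of_le (fun s => sq_nonneg _) hznorm (hDsum.mul_left (‖x‖ ^ 2))
    have hzs : Summable z := summable_of_orth_norm_sq hzorth hzsum2
    have hzh : HasSum z (∑' s, z s) := hzs.hasSum
    have hnorm2 : ‖∑' s, z s‖ ^ 2 ≤ ‖x‖ ^ 2 * (‖φ‖ ^ 2 * ‖v‖ ^ 2) := by
      apply norm_tsum_sq_le_orth hzorth hzh
      intro Fin
      calc ∑ s ∈ Fin, ‖z s‖ ^ 2 ≤ ∑ s ∈ Fin, ‖x‖ ^ 2 * ∑' t, F s t :=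
            Finset.sum_le_sum fun s _ => hznorm s
        _ ≤ ∑' s, ‖x‖ ^ 2 * ∑' t, F s t := Summable.sum_le_tsum Fin
              (fun s _ => mul_nonneg (sq_nonneg _) (tsum_nonneg (hF_nonneg s)))
              (hDsum.mul_left _)
        _ = ‖x‖ ^ 2 * ∑' s, ∑' t, F s t := tsum_mul_left
        _ = ‖x‖ ^ 2 * (‖φ‖ ^ 2 * ‖v‖ ^ 2) := by rw [hDtot]
    refine ⟨hu, hzh, ?_⟩
    have h4 : ‖∑' s, z s‖ ^ 2 ≤ (‖φ‖ * ‖x‖ * ‖v‖) ^ 2 := by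
      calc ‖∑' s, z s‖ ^ 2 ≤ ‖x‖ ^ 2 * (‖φ‖ ^ 2 * ‖v‖ ^ 2) := hnorm2
        _ = (‖φ‖ * ‖x‖ * ‖v‖) ^ 2 := by ring
    have h5 := Real.sqrt_le_sqrt h4
    rwa [Real.sqrt_sq (norm_nonneg _), Real.sqrt_sq (by positivity)] at h5
  -- linearity of the candidate map
  have hu_add : ∀ (s : G) (v v' : H),
      (∑' t, w s (v + v') t) = (∑' t, w s v t) + (∑' t, w s v' t) := by
    intro s v v'
    have h := ((key v).1 s).add ((key v').1 s)
    have he : (fun t => w s v t + w s v' t) = w s (v + v') := by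
      funext t
      simp only [hw_def, map_add, smul_add]
    rw [he] at h
    exact h.tsum_eq
  have hu_smul : ∀ (s : G) (a : ℂ) (v : H),
      (∑' t, w s (a • v) t) = a • (∑' t, w s v t) := by
    intro s a v
    have h := ((key v).1 s).const_smul a
    have he : (fun t => a • w s v t) = w s (a • v) := by
      funext t
      simp only [hw_def, map_smul, smul_comm a]
    rw [he] at h
    exact h.tsum_eq
  have hY_add : ∀ v v' : H,
      (∑' s, P s (x (∑' t, w s (v + v') t)))
        = (∑' s, P s (x (∑' t, w s v t))) + (∑' s, P s (x (∑' t, w s v' t))) := by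
    intro v v'
    have h := ((key v).2.1).add ((key v').2.1)
    have he : (fun s => P s (x (∑' t, w s v t)) + P s (x (∑' t, w s v' t)))
        = fun s => P s (x (∑' t, w s (v + v') t)) := by
      funext s
      rw [hu_add s v v', map_add, map_add]
    rw [he] at h
    exact h.tsum_eq
  have hY_smul : ∀ (a : ℂ) (v : H),
      (∑' s, P s (x (∑' t, w s (a • v) t))) = a • (∑' s, P s (x (∑' t, w s v t))) := by
    intro a v
    have h := ((key v).2.1).const_smul a
    have he : (fun s => a • P s (x (∑' t, w s v t)))
        = fun s => P s (x (∑' t, w s (a • v) t)) := by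
      funext s
      rw [hu_smul s a v, map_smul, map_smul]
    rw [he] at h
    exact h.tsum_eq
  let Ylin : H →ₗ[ℂ] H :=
    { toFun := fun v => ∑' s, P s (x (∑' t, w s v t))
      map_add' := hY_add
      map_smul' := hY_smul }
  let y : H →L[ℂ] H := Ylin.mkContinuous (‖φ‖ * ‖x‖) (fun v => (key v).2.2)
  have hyapply : ∀ v : H, y v = ∑' s, P s (x (∑' t, w s v t)) := fun v => rfl
  -- block identity
  have hblock : ∀ s t : G,
      (P s).comp (y.comp (P t)) = φ (s * t⁻¹) • ((P s).comp (x.comp (P t))) := by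
    intro s t
    ext v
    simp only [ContinuousLinearMap.comp_apply, ContinuousLinearMap.smul_apply]
    have hcol : ∀ s' : G, (∑' t', w s' (P t v) t') = φ (s' * t⁻¹) • P t v := by
      intro s'
      rw [tsum_eq_single t]
      · simp only [hw_def]
        rw [apply_idem hPidem]
      · intro t' ht'
        simp only [hw_def]
        rw [apply_orth hPorth ht', smul_zero]
    have h' := ((key (P t v)).2.1).mapL (P s)
    have hsingle : HasSum (fun s' => P s (P s' (x (∑' t', w s' (P t v) t'))))
        (P s (P s (x (∑' t', w s (P t v) t')))) := by
      apply hasSum_single s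
      intro s' hs'
      exact apply_orth hPorth (Ne.symm hs') _
    have heq := h'.unique hsingle
    rw [hyapply, heq, apply_idem hPidem, hcol s, map_smul, map_smul]
  -- uniqueness
  have huniq : ∀ z : H →L[ℂ] H,
      (∀ s t : G, (P s).comp (z.comp (P t)) = φ (s * t⁻¹) • ((P s).comp (x.comp (P t)))) →
      z = y := by
    intro z hz
    ext v
    have hproj : ∀ s, P s (z v) = P s (y v) := by
      intro s
      have h1 : HasSum (fun t => P s (z (P t v))) (P s (z v)) := ((hPsum v).mapL z).mapL (P s)
      have h2 : HasSum (fun t => P s (y (P t v))) (P s (y v)) := ((hPsum v).mapL y).mapL (P s)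
      have he : (fun t => P s (z (P t v))) = fun t => P s (y (P t v)) := by
        funext t
        have e1 := ContinuousLinearMap.ext_iff.mp (hz s t) v
        have e2 := ContinuousLinearMap.ext_iff.mp (hblock s t) v
        simp only [ContinuousLinearMap.comp_apply, ContinuousLinearMap.smul_apply] at e1 e2
        rw [e1, ← e2]
      rw [he] at h1
      exact h1.unique h2
    have h1 : HasSum (fun s => P s (z v)) (z v) := hPsum (z v)
    have h2 : HasSum (fun s => P s (y v)) (y v) := hPsum (y v)
    rw [show (fun s => P s (z v)) = fun s => P s (y v) from funext hproj] at h1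
    exact h1.unique h2
  exact ⟨y, hblock, Ylin.mkContinuous_norm_le (by positivity) _, huniq⟩
end

section
/- Let H be a complex Hilbert space decomposed as the orthogonal direct sum of subspaces H_m indexed by m ∈ ℤ (via pairwise orthogonal projections P_m with ∑_{m∈ℤ} P_m = I strongly). Suppose a and c are bounded operators on H with ‖c‖ ≤ 1 such that P_m c P_n = (m − n) · (P_m a P_n) for all m, n ∈ ℤ (so c is the commutator [D, a] for the diagonal operator D = ∑ m P_m), and suppose P_m a P_m = 0 for all m ∈ ℤ. Then ‖a‖ ≤ π/√3. -/
/-!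
Write `a_{mn} = P_m a P_n`. The hypotheses give `a_{mm} = 0` and `a_{mn} = c_{mn} / (m - n)` for
`m ≠ n`, so `|⟪y, a x⟫| ≤ ∑_{m,n} ‖P_m y‖ |m - n|⁻¹ ‖P_m c P_n x‖`. Cauchy–Schwarz over the pairs
`(m, n)` bounds this by the square roots of `∑_{m,n} ‖P_m y‖² (m - n)⁻² = ‖y‖² ∑_{d ≠ 0} d⁻² =
‖y‖² π²/3` and of `∑_{m,n} ‖P_m c P_n x‖² = ∑_n ‖c P_n x‖² ≤ ‖c‖² ‖x‖²`, both by Parseval's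
identity `∑_m ‖P_m v‖² = ‖v‖²` for the decomposition.
-/

open Real
open scoped InnerProductSpace

-- `((0 : ℝ) ^ 2)⁻¹ = 0` in Lean, so the `d = 0` term contributes nothing.
theorem hasSum_int_inv_sq : HasSum (fun d : ℤ => ((d : ℝ) ^ 2)⁻¹) (π ^ 2 / 3) := by
  have hpos : HasSum (fun n : ℕ => (((n : ℤ) : ℝ) ^ 2)⁻¹) (π ^ 2 / 6) := by
    simpa using hasSum_zeta_two
  have hneg : HasSum (fun n : ℕ => (((-(n + 1) : ℤ) : ℝ) ^ 2)⁻¹) (π ^ 2 / 6) := by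
    have h : HasSum (fun n : ℕ => (((n : ℝ) + 1) ^ 2)⁻¹) (π ^ 2 / 6) := by
      simpa using (hasSum_nat_add_iff' 1).2 hasSum_zeta_two
    convert h using 3 with n
    push_cast; ring
  convert HasSum.of_nat_of_neg_add_one (f := fun d : ℤ => ((d : ℝ) ^ 2)⁻¹) hpos hneg using 1
  ring

theorem Real.summable_and_tsum_mul_le_sqrt_mul_sqrt {ι : Type*} {f g : ι → ℝ}
    (hf : 0 ≤ f) (hg : 0 ≤ g) (hf2 : Summable fun i => f i ^ 2) (hg2 : Summable fun i => g i ^ 2) :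
    (Summable fun i => f i * g i) ∧ ∑' i, f i * g i ≤ √(∑' i, f i ^ 2) * √(∑' i, g i ^ 2) := by
  simpa [Real.sqrt_eq_rpow] using
    summable_and_inner_le_Lp_mul_Lq_tsum_of_nonneg HolderConjugate.two_two hf hg
      (by simpa [Real.rpow_two] using hf2) (by simpa [Real.rpow_two] using hg2)

section InnerProductSpace

variable {𝕜 E : Type*} [RCLike 𝕜] [NormedAddCommGroup E] [InnerProductSpace 𝕜 E] [CompleteSpace E]

theorem IsSelfAdjoint.inner_apply_apply_of_comp_self {p : E →L[𝕜] E} (hp : IsSelfAdjoint p)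
    (hpp : p.comp p = p) (y z : E) : ⟪p y, p z⟫_𝕜 = ⟪p y, z⟫_𝕜 := by
  rw [← ContinuousLinearMap.adjoint_inner_right, hp.adjoint_eq, ← ContinuousLinearMap.comp_apply,
    hpp, ← ContinuousLinearMap.adjoint_inner_right, hp.adjoint_eq]

section Decomposition

variable {ι : Type*} {P : ι → E →L[𝕜] E}

theorem hasSum_norm_sq_apply (hsa : ∀ m, IsSelfAdjoint (P m))
    (hidem : ∀ m, (P m).comp (P m) = P m) {v : E} (hv : HasSum (fun m => P m v) v) :
    HasSum (fun m => ‖P m v‖ ^ 2) (‖v‖ ^ 2) := by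
  have h := RCLike.reCLM.hasSum ((innerSL 𝕜 v).hasSum hv)
  simp only [innerSL_apply_apply, RCLike.reCLM_apply, inner_self_eq_norm_sq] at h
  have hm (m : ι) : RCLike.re ⟪v, P m v⟫_𝕜 = ‖P m v‖ ^ 2 := by
    rw [inner_re_symm, ← (hsa m).inner_apply_apply_of_comp_self (hidem m), inner_self_eq_norm_sq]
  simpa only [hm] using h

theorem inner_eq_tsum_inner_apply_apply (hsa : ∀ m, IsSelfAdjoint (P m))
    (hP : ∀ v, HasSum (fun m => P m v) v) (a : E →L[𝕜] E) {x y : E}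
    (hF : Summable fun p : ι × ι => ⟪P p.1 y, a (P p.2 x)⟫_𝕜) :
    ⟪y, a x⟫_𝕜 = ∑' p : ι × ι, ⟪P p.1 y, a (P p.2 x)⟫_𝕜 := by
  have hrow (m : ι) : HasSum (fun n => ⟪P m y, a (P n x)⟫_𝕜) ⟪P m y, a x⟫_𝕜 :=
    ((innerSL 𝕜 (P m y)).comp a).hasSum (hP x)
  have hcol : HasSum (fun m => ⟪P m y, a x⟫_𝕜) ⟪y, a x⟫_𝕜 := by
    simp_rw [← ContinuousLinearMap.adjoint_inner_right, (hsa _).adjoint_eq]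
    exact (innerSL 𝕜 y).hasSum (hP (a x))
  exact ((hF.hasSum.prod_fiberwise hrow).unique hcol).symm

theorem summable_and_tsum_norm_sq_apply_apply_apply_le (hsa : ∀ m, IsSelfAdjoint (P m))
    (hidem : ∀ m, (P m).comp (P m) = P m) (hP : ∀ v, HasSum (fun m => P m v) v)
    (c : E →L[𝕜] E) (x : E) :
    (Summable fun p : ι × ι => ‖P p.1 (c (P p.2 x))‖ ^ 2) ∧
      ∑' p : ι × ι, ‖P p.1 (c (P p.2 x))‖ ^ 2 ≤ ‖c‖ ^ 2 * ‖x‖ ^ 2 := by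
  have hx := hasSum_norm_sq_apply hsa hidem (hP x)
  have hcol (n : ι) : HasSum (fun m => ‖P m (c (P n x))‖ ^ 2) (‖c (P n x)‖ ^ 2) :=
    hasSum_norm_sq_apply hsa hidem (hP _)
  have hle (n : ι) : ‖c (P n x)‖ ^ 2 ≤ ‖c‖ ^ 2 * ‖P n x‖ ^ 2 := by
    rw [← mul_pow]
    gcongr
    exact c.le_opNorm _
  have hswap : Summable fun p : ι × ι => ‖P p.2 (c (P p.1 x))‖ ^ 2 := by
    refine (summable_prod_of_nonneg fun _ => sq_nonneg _).2 ⟨fun n => (hcol n).summable, ?_⟩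
    simpa only [(hcol _).tsum_eq] using
      Summable.of_nonneg_of_le (fun _ => sq_nonneg _) hle (hx.summable.mul_left _)
  refine ⟨hswap.prod_symm, ?_⟩
  rw [← (Equiv.prodComm ι ι).tsum_eq]
  exact hasSum_le hle (hswap.hasSum.prod_fiberwise hcol) (hx.mul_left _)

end Decomposition

section IntegerDecomposition

variable {P : ℤ → E →L[𝕜] E}

theorem hasSum_norm_sq_apply_mul_inv_sq_sub (hsa : ∀ m, IsSelfAdjoint (P m))
    (hidem : ∀ m, (P m).comp (P m) = P m) (hP : ∀ v, HasSum (fun m => P m v) v) (y : E) :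
    HasSum (fun p : ℤ × ℤ => ‖P p.1 y‖ ^ 2 * (((p.1 - p.2 : ℤ) : ℝ) ^ 2)⁻¹)
      (‖y‖ ^ 2 * (π ^ 2 / 3)) := by
  have hy := hasSum_norm_sq_apply hsa hidem (hP y)
  have hprod := hy.mul hasSum_int_inv_sq <| hy.summable.mul_of_nonneg hasSum_int_inv_sq.summable
    (fun _ => sq_nonneg _) (fun _ => inv_nonneg.2 (sq_nonneg _))
  exact ((Equiv.refl ℤ).prodShear Equiv.subLeft).hasSum_iff.2 hprod

theorem norm_inner_apply_apply_le (hsa : ∀ m, IsSelfAdjoint (P m))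
    (hidem : ∀ m, (P m).comp (P m) = P m) {a c : E →L[𝕜] E}
    (hcomm : ∀ m n : ℤ,
      (P m).comp (c.comp (P n)) = ((m - n : ℤ) : 𝕜) • ((P m).comp (a.comp (P n))))
    (hdiag : ∀ m : ℤ, (P m).comp (a.comp (P m)) = 0) (x y : E) (m n : ℤ) :
    ‖⟪P m y, a (P n x)⟫_𝕜‖ ≤ ‖P m y‖ * |((m - n : ℤ) : ℝ)|⁻¹ * ‖P m (c (P n x))‖ := by
  rw [← (hsa m).inner_apply_apply_of_comp_self (hidem m)]
  rcases eq_or_ne m n with rfl | hmn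
  · have hzero : P m (a (P m x)) = 0 := by simpa using congr($(hdiag m) x)
    rw [hzero, inner_zero_right, norm_zero]
    positivity
  have hmn' : ((m - n : ℤ) : 𝕜) ≠ 0 := by exact_mod_cast sub_ne_zero.2 hmn
  have hcoeff : P m (a (P n x)) = ((m - n : ℤ) : 𝕜)⁻¹ • P m (c (P n x)) := by
    rw [eq_inv_smul_iff₀ hmn']
    simpa using congr($(hcomm m n) x).symm
  calc ‖⟪P m y, P m (a (P n x))⟫_𝕜‖ ≤ ‖P m y‖ * ‖P m (a (P n x))‖ := norm_inner_le_norm _ _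
    _ = ‖P m y‖ * |((m - n : ℤ) : ℝ)|⁻¹ * ‖P m (c (P n x))‖ := by
      rw [hcoeff, norm_smul, norm_inv, ← RCLike.ofReal_intCast, RCLike.norm_ofReal, mul_assoc]

theorem norm_inner_le_of_commutator_of_diagonal_zero (hsa : ∀ m, IsSelfAdjoint (P m))
    (hidem : ∀ m, (P m).comp (P m) = P m) (hP : ∀ v, HasSum (fun m => P m v) v)
    {a c : E →L[𝕜] E}
    (hcomm : ∀ m n : ℤ,
      (P m).comp (c.comp (P n)) = ((m - n : ℤ) : 𝕜) • ((P m).comp (a.comp (P n))))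
    (hdiag : ∀ m : ℤ, (P m).comp (a.comp (P m)) = 0) (x y : E) :
    ‖⟪y, a x⟫_𝕜‖ ≤ π / √3 * ‖c‖ * (‖y‖ * ‖x‖) := by
  set F : ℤ × ℤ → 𝕜 := fun p => ⟪P p.1 y, a (P p.2 x)⟫_𝕜
  set f : ℤ × ℤ → ℝ := fun p => ‖P p.1 y‖ * |((p.1 - p.2 : ℤ) : ℝ)|⁻¹
  set g : ℤ × ℤ → ℝ := fun p => ‖P p.1 (c (P p.2 x))‖
  have hf2 : HasSum (fun p => f p ^ 2) (‖y‖ ^ 2 * (π ^ 2 / 3)) := by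
    simpa only [f, mul_pow, inv_pow, sq_abs] using
      hasSum_norm_sq_apply_mul_inv_sq_sub hsa hidem hP y
  obtain ⟨hg2, hg2_le⟩ := summable_and_tsum_norm_sq_apply_apply_apply_le hsa hidem hP c x
  obtain ⟨hfg, hfg_le⟩ := Real.summable_and_tsum_mul_le_sqrt_mul_sqrt
    (fun p => by positivity) (fun p => norm_nonneg _) hf2.summable hg2
  have hF (p : ℤ × ℤ) : ‖F p‖ ≤ f p * g p :=
    norm_inner_apply_apply_le hsa hidem hcomm hdiag x y p.1 p.2
  have hFsum : Summable fun p => ‖F p‖ := .of_nonneg_of_le (fun _ => norm_nonneg _) hF hfg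
  calc ‖⟪y, a x⟫_𝕜‖ = ‖∑' p, F p‖ := by rw [inner_eq_tsum_inner_apply_apply hsa hP a hFsum.of_norm]
    _ ≤ ∑' p, f p * g p := (norm_tsum_le_tsum_norm hFsum).trans (hFsum.tsum_le_tsum hF hfg)
    _ ≤ √(‖y‖ ^ 2 * (π ^ 2 / 3)) * √(‖c‖ ^ 2 * ‖x‖ ^ 2) := by
      rw [← hf2.tsum_eq]
      exact hfg_le.trans (by gcongr)
    _ = π / √3 * ‖c‖ * (‖y‖ * ‖x‖) := by
      rw [← mul_pow, Real.sqrt_sq (by positivity), Real.sqrt_mul (by positivity),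
        Real.sqrt_sq (norm_nonneg _), Real.sqrt_div' _ (by norm_num), Real.sqrt_sq pi_pos.le]
      ring

theorem opNorm_le_of_commutator_of_diagonal_zero (hsa : ∀ m, IsSelfAdjoint (P m))
    (hidem : ∀ m, (P m).comp (P m) = P m) (hP : ∀ v, HasSum (fun m => P m v) v)
    {a c : E →L[𝕜] E}
    (hcomm : ∀ m n : ℤ,
      (P m).comp (c.comp (P n)) = ((m - n : ℤ) : 𝕜) • ((P m).comp (a.comp (P n))))
    (hdiag : ∀ m : ℤ, (P m).comp (a.comp (P m)) = 0) :
    ‖a‖ ≤ π / √3 * ‖c‖ := by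
  refine ContinuousLinearMap.opNorm_le_of_re_inner_le (by positivity) fun x y hx hy => ?_
  calc RCLike.re ⟪a x, y⟫_𝕜 ≤ ‖⟪y, a x⟫_𝕜‖ := (RCLike.re_le_norm _).trans_eq (norm_inner_symm _ _)
    _ ≤ π / √3 * ‖c‖ := by
      simpa [hx, hy] using norm_inner_le_of_commutator_of_diagonal_zero hsa hidem hP hcomm hdiag x y

end IntegerDecomposition

end InnerProductSpace

theorem norm_le_of_commutator_le_one_of_diagonal_zero_general
    (H : Type*) [NormedAddCommGroup H] [InnerProductSpace ℂ H] [CompleteSpace H]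
    (P : ℤ → H →L[ℂ] H)
    (hPsa : ∀ m, IsSelfAdjoint (P m))
    (hPidem : ∀ m, (P m).comp (P m) = P m)
    (hPsum : ∀ v : H, HasSum (fun m => P m v) v)
    (a c : H →L[ℂ] H) (hc : ‖c‖ ≤ 1)
    (hcomm : ∀ m n : ℤ,
      (P m).comp (c.comp (P n)) = ((m - n : ℤ) : ℂ) • ((P m).comp (a.comp (P n))))
    (hdiag : ∀ m : ℤ, (P m).comp (a.comp (P m)) = 0) :
    ‖a‖ ≤ Real.pi / Real.sqrt 3 := by
  calc ‖a‖ ≤ π / √3 * ‖c‖ := opNorm_le_of_commutator_of_diagonal_zero hPsa hPidem hPsum hcomm hdiag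
    _ ≤ π / √3 := mul_le_of_le_one_right (by positivity) hc

/-- If `[D, a]` is bounded of norm at most `1` for the diagonal operator
`D = ∑ m P_m` over `ℤ`, and the main diagonal of `a` vanishes, then `‖a‖ ≤ π/√3`. -/
theorem norm_le_of_commutator_le_one_of_diagonal_zero
    (H : Type*) [NormedAddCommGroup H] [InnerProductSpace ℂ H] [CompleteSpace H]
    (P : ℤ → H →L[ℂ] H)
    (hPsa : ∀ m, IsSelfAdjoint (P m))
    (hPidem : ∀ m, (P m).comp (P m) = P m)
    (hPorth : ∀ m n : ℤ, m ≠ n → (P m).comp (P n) = 0)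
    (hPsum : ∀ v : H, HasSum (fun m => P m v) v)
    (a c : H →L[ℂ] H) (hc : ‖c‖ ≤ 1)
    (hcomm : ∀ m n : ℤ,
      (P m).comp (c.comp (P n)) = ((m - n : ℤ) : ℂ) • ((P m).comp (a.comp (P n))))
    (hdiag : ∀ m : ℤ, (P m).comp (a.comp (P m)) = 0) :
    ‖a‖ ≤ Real.pi / Real.sqrt 3 :=
  norm_le_of_commutator_le_one_of_diagonal_zero_general H P hPsa hPidem hPsum a c hc hcomm hdiag
end

section
/- Let H be a complex Hilbert space decomposed as the orthogonal direct sum of subspaces H_m indexed by m ∈ ℤ (via pairwise orthogonal projections P_m with ∑_{m∈ℤ} P_m = I strongly). Suppose a and c are bounded operators on H with ‖c‖ ≤ 1 such that P_m c P_n = (m − n) · (P_m a P_n) for all m, n ∈ ℤ. Then for every integer k ≥ 1 one has ‖a − ∑_{j=−k}^{k} ρ_j(a)‖ ≤ √(2/k), where ρ_j(a) is the bounded operator determined by P_m ρ_j(a) P_n = P_m a P_n when m − n = j and P_m ρ_j(a) P_n = 0 when m − n ≠ j. -/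
/-!
Put `b = a - ∑_{|j| ≤ k} ρ_j(a)`. By the commutator relation `P_m b P_n = g(m,n) • P_m c P_n`
with `g(m,n) = (m - n)⁻¹` for `|m - n| > k` and `g(m,n) = 0` otherwise. Hence `P_m b v = P_m c w_m`
for `w_m = ∑_n g(m,n) • P_n v`, and Parseval together with `‖c‖ ≤ 1` gives
`‖P_m b v‖² ≤ ∑_n |g(m,n)|² ‖P_n v‖²`. Summing over `m` and using the column bound
`∑_m |g(m,n)|² = ∑_{|j| > k} j⁻² ≤ 2/k` yields `‖b v‖² ≤ (2/k) ‖v‖²`.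
-/

open scoped InnerProductSpace

theorem sum_tsum_mul_le {ι κ : Type*} {a : κ → ι → ℝ} {u : ι → ℝ} {S : ℝ}
    (hu : ∀ n, 0 ≤ u n) (hus : Summable u) (hsummable : ∀ m, Summable fun n => a m n * u n)
    (haS : ∀ n (s : Finset κ), ∑ m ∈ s, a m n ≤ S) (s : Finset κ) :
    ∑ m ∈ s, ∑' n, a m n * u n ≤ S * ∑' n, u n :=
  calc ∑ m ∈ s, ∑' n, a m n * u n = ∑' n, (∑ m ∈ s, a m n) * u n := by
        simp_rw [Finset.sum_mul]
        exact (Summable.tsum_finsetSum fun m _ => hsummable m).symm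
    _ ≤ ∑' n, S * u n :=
        Summable.tsum_le_tsum (fun n => mul_le_mul_of_nonneg_right (haS n s) (hu n))
          (by simpa only [Finset.sum_mul] using summable_sum fun m _ => hsummable m)
          (hus.mul_left S)
    _ = S * ∑' n, u n := tsum_mul_left

section Decomposition

variable {𝕜 E ι : Type*} [RCLike 𝕜] [NormedAddCommGroup E] [InnerProductSpace 𝕜 E]

theorem OrthogonalFamily.hasSum_norm_sq {G : ι → Type*} [∀ i, NormedAddCommGroup (G i)]
    [∀ i, InnerProductSpace 𝕜 (G i)] {V : ∀ i, G i →ₗᵢ[𝕜] E} (hV : OrthogonalFamily 𝕜 G V)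
    {f : ∀ i, G i} {x : E} (hf : HasSum (fun i => V i (f i)) x) :
    HasSum (fun i => ‖f i‖ ^ 2) (‖x‖ ^ 2) :=
  (((continuous_norm.pow 2).tendsto x).comp hf).congr fun s => hV.norm_sum f s

variable [CompleteSpace E]

theorem inner_apply_eq_zero_of_comp_eq_zero {p q : E →L[𝕜] E} (hp : IsSelfAdjoint p)
    (hpq : p.comp q = 0) (x y : E) : ⟪p x, q y⟫_𝕜 = 0 := by
  rw [← hp.adjoint_eq, ContinuousLinearMap.adjoint_inner_left, ← p.comp_apply, hpq,
    zero_apply, inner_zero_right]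

variable {P : ι → E →L[𝕜] E}

theorem orthogonalFamily_range (hPsa : ∀ i, IsSelfAdjoint (P i))
    (hPorth : Pairwise fun i j => (P i).comp (P j) = 0) :
    OrthogonalFamily 𝕜 (fun i => LinearMap.range (P i : E →ₗ[𝕜] E))
      fun i => (LinearMap.range (P i : E →ₗ[𝕜] E)).subtypeₗᵢ := by
  rintro i j hij ⟨_, x, rfl⟩ ⟨_, y, rfl⟩
  exact inner_apply_eq_zero_of_comp_eq_zero (hPsa i) (hPorth hij) x y

theorem summable_smul_proj_iff (hPsa : ∀ i, IsSelfAdjoint (P i))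
    (hPorth : Pairwise fun i j => (P i).comp (P j) = 0) (φ : ι → 𝕜) (v : E) :
    Summable (fun i => φ i • P i v) ↔ Summable fun i => ‖φ i‖ ^ 2 * ‖P i v‖ ^ 2 := by
  simpa [norm_smul, mul_pow] using
    (orthogonalFamily_range hPsa hPorth).summable_iff_norm_sq_summable
      fun i => (⟨φ i • P i v, φ i • v, by simp⟩ : LinearMap.range (P i : E →ₗ[𝕜] E))

theorem hasSum_norm_sq_smul_proj (hPsa : ∀ i, IsSelfAdjoint (P i))
    (hPorth : Pairwise fun i j => (P i).comp (P j) = 0) (φ : ι → 𝕜) {v w : E}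
    (h : HasSum (fun i => φ i • P i v) w) :
    HasSum (fun i => ‖φ i‖ ^ 2 * ‖P i v‖ ^ 2) (‖w‖ ^ 2) := by
  simpa [norm_smul, mul_pow] using (orthogonalFamily_range hPsa hPorth).hasSum_norm_sq
    (f := fun i => (⟨φ i • P i v, φ i • v, by simp⟩ : LinearMap.range (P i : E →ₗ[𝕜] E))) h

theorem hasSum_norm_sq_proj (hPsa : ∀ i, IsSelfAdjoint (P i))
    (hPorth : Pairwise fun i j => (P i).comp (P j) = 0) (hPsum : ∀ v, HasSum (fun i => P i v) v)
    (v : E) : HasSum (fun i => ‖P i v‖ ^ 2) (‖v‖ ^ 2) := by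
  simpa using hasSum_norm_sq_smul_proj hPsa hPorth 1 (by simpa using hPsum v)

theorem norm_proj_apply_sq_le_tsum (hP : ∀ i, IsStarProjection (P i))
    (hPorth : Pairwise fun i j => (P i).comp (P j) = 0)
    (hPsum : ∀ v, HasSum (fun i => P i v) v) {b c : E →L[𝕜] E} (hc : ‖c‖ ≤ 1)
    {g : ι → ι → 𝕜} (hb : ∀ m n, (P m).comp (b.comp (P n)) = g m n • (P m).comp (c.comp (P n)))
    (m : ι) {v : E} (hsum : Summable fun n => ‖g m n‖ ^ 2 * ‖P n v‖ ^ 2) :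
    ‖P m (b v)‖ ^ 2 ≤ ∑' n, ‖g m n‖ ^ 2 * ‖P n v‖ ^ 2 := by
  have hPsa i := (hP i).isSelfAdjoint
  obtain ⟨w, hw⟩ := (summable_smul_proj_iff hPsa hPorth (g m) v).mpr hsum
  have hbw : P m (b v) = P m (c w) := by
    refine (((P m).comp b).hasSum (hPsum v)).unique
      ((((P m).comp c).hasSum hw).congr_fun fun n => ?_)
    simpa using congr($(hb m n) v)
  calc ‖P m (b v)‖ ^ 2 = ‖P m (c w)‖ ^ 2 := by rw [hbw]
    _ ≤ ‖w‖ ^ 2 := by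
        have hPc : ‖(P m).comp c‖ ≤ 1 :=
          (ContinuousLinearMap.opNorm_comp_le _ _).trans
            (mul_le_one₀ (hP m).norm_le (norm_nonneg c) hc)
        gcongr
        simpa using ((P m).comp c).le_of_opNorm_le hPc w
    _ = ∑' n, ‖g m n‖ ^ 2 * ‖P n v‖ ^ 2 :=
        (hasSum_norm_sq_smul_proj hPsa hPorth (g m) hw).tsum_eq.symm

theorem norm_le_sqrt_of_proj_comp_eq_smul (hP : ∀ i, IsStarProjection (P i))
    (hPorth : Pairwise fun i j => (P i).comp (P j) = 0)
    (hPsum : ∀ v, HasSum (fun i => P i v) v) {b c : E →L[𝕜] E} (hc : ‖c‖ ≤ 1)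
    {g : ι → ι → 𝕜} {S : ℝ} (hg : ∀ n (s : Finset ι), ∑ m ∈ s, ‖g m n‖ ^ 2 ≤ S)
    (hb : ∀ m n, (P m).comp (b.comp (P n)) = g m n • (P m).comp (c.comp (P n))) :
    ‖b‖ ≤ √S := by
  refine ContinuousLinearMap.opNorm_le_bound _ (Real.sqrt_nonneg S) fun v => ?_
  have hPsa i := (hP i).isSelfAdjoint
  have hv := hasSum_norm_sq_proj hPsa hPorth hPsum v
  have hrow : ∀ m, Summable fun n => ‖g m n‖ ^ 2 * ‖P n v‖ ^ 2 := fun m =>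
    (hv.summable.mul_left S).of_nonneg_of_le (fun n => by positivity)
      fun n => by gcongr; simpa using hg n {m}
  have hsq : ‖b v‖ ^ 2 ≤ S * ‖v‖ ^ 2 := by
    refine hasSum_le_of_sum_le (hasSum_norm_sq_proj hPsa hPorth hPsum (b v)) fun s => ?_
    calc ∑ m ∈ s, ‖P m (b v)‖ ^ 2 ≤ ∑ m ∈ s, ∑' n, ‖g m n‖ ^ 2 * ‖P n v‖ ^ 2 :=
          Finset.sum_le_sum fun m _ =>
            norm_proj_apply_sq_le_tsum hP hPorth hPsum hc hb m (hrow m)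
      _ ≤ S * ∑' n, ‖P n v‖ ^ 2 :=
          sum_tsum_mul_le (fun n => by positivity) hv.summable hrow hg s
      _ = S * ‖v‖ ^ 2 := by rw [hv.tsum_eq]
  rw [← Real.sqrt_sq (norm_nonneg v), ← Real.sqrt_mul' S (sq_nonneg _)]
  exact Real.le_sqrt_of_sq_le hsq

end Decomposition

theorem sum_range_ite_inv_sq_le {k : ℕ} (hk : k ≠ 0) (N : ℕ) :
    ∑ i ∈ Finset.range N, (if k < i then ((i : ℝ) ^ 2)⁻¹ else 0) ≤ (k : ℝ)⁻¹ := by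
  rw [← Finset.sum_filter]
  calc ∑ i ∈ (Finset.range N).filter (k < ·), ((i : ℝ) ^ 2)⁻¹
      ≤ ∑ i ∈ Finset.Ioc k (max k N), ((i : ℝ) ^ 2)⁻¹ := by
        refine Finset.sum_le_sum_of_subset_of_nonneg (fun i hi => ?_) fun i _ _ => by positivity
        simp only [Finset.mem_filter, Finset.mem_range] at hi
        simp only [Finset.mem_Ioc]
        omega
    _ ≤ (k : ℝ)⁻¹ - ((max k N : ℕ) : ℝ)⁻¹ := sum_Ioc_inv_sq_le_sub hk (le_max_left k N)
    _ ≤ (k : ℝ)⁻¹ := sub_le_self _ (by positivity)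

noncomputable def tailCoeff (k : ℕ) (j : ℤ) : ℂ := if (k : ℤ) < |j| then (j : ℂ)⁻¹ else 0

theorem norm_sq_tailCoeff (k : ℕ) (j : ℤ) :
    ‖tailCoeff k j‖ ^ 2 = if (k : ℤ) < |j| then ((j : ℝ) ^ 2)⁻¹ else 0 := by
  unfold tailCoeff
  split_ifs <;> simp

theorem summable_norm_sq_tailCoeff (k : ℕ) : Summable fun j => ‖tailCoeff k j‖ ^ 2 := by
  refine (Real.summable_one_div_int_pow.mpr one_lt_two).of_nonneg_of_le (fun j => by positivity)
    fun j => ?_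
  rw [norm_sq_tailCoeff]
  split_ifs <;> simp [sq_nonneg]

theorem tsum_norm_sq_tailCoeff_le {k : ℕ} (hk : k ≠ 0) :
    ∑' j, ‖tailCoeff k j‖ ^ 2 ≤ 2 / k := by
  have hpair : ∀ n : ℕ, ‖tailCoeff k n‖ ^ 2 + ‖tailCoeff k (-n)‖ ^ 2
      = 2 * if k < n then ((n : ℝ) ^ 2)⁻¹ else 0 := fun n => by
    simp only [norm_sq_tailCoeff, abs_neg, Nat.abs_cast, Nat.cast_lt, Int.cast_neg,
      Int.cast_natCast, neg_sq]
    split_ifs <;> ring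
  have h := tsum_nat_add_neg (summable_norm_sq_tailCoeff k)
  rw [tsum_congr hpair, tsum_mul_left, norm_sq_tailCoeff, if_neg (by simp), add_zero] at h
  rw [← h, div_eq_mul_inv]
  gcongr
  exact Real.tsum_le_of_sum_range_le (fun n => by positivity) (sum_range_ite_inv_sq_le hk)

theorem sum_norm_sq_tailCoeff_sub_le {k : ℕ} (hk : k ≠ 0) (n : ℤ) (s : Finset ℤ) :
    ∑ m ∈ s, ‖tailCoeff k (m - n)‖ ^ 2 ≤ 2 / k := by
  have hshift : Summable fun m => ‖tailCoeff k (m - n)‖ ^ 2 :=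
    (Equiv.subRight n).summable_iff.mpr (summable_norm_sq_tailCoeff k)
  calc ∑ m ∈ s, ‖tailCoeff k (m - n)‖ ^ 2 ≤ ∑' m, ‖tailCoeff k (m - n)‖ ^ 2 :=
        hshift.sum_le_tsum s fun m _ => by positivity
    _ = ∑' j, ‖tailCoeff k j‖ ^ 2 := (Equiv.subRight n).tsum_eq fun j => ‖tailCoeff k j‖ ^ 2
    _ ≤ 2 / k := tsum_norm_sq_tailCoeff_le hk

section Diagonals

variable {E : Type*} [NormedAddCommGroup E] [NormedSpace ℂ E] {P ρ : ℤ → E →L[ℂ] E}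
  {a : E →L[ℂ] E}

theorem proj_comp_sub_sum_comp_proj
    (hρeq : ∀ j m n : ℤ, m - n = j → (P m).comp ((ρ j).comp (P n)) = (P m).comp (a.comp (P n)))
    (hρne : ∀ j m n : ℤ, m - n ≠ j → (P m).comp ((ρ j).comp (P n)) = 0) (s : Finset ℤ)
    (m n : ℤ) :
    (P m).comp ((a - ∑ j ∈ s, ρ j).comp (P n))
      = if m - n ∈ s then 0 else (P m).comp (a.comp (P n)) := by
  have hdiag : ∀ j, (P m).comp ((ρ j).comp (P n))
      = if m - n = j then (P m).comp (a.comp (P n)) else 0 := fun j => by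
    split_ifs with h
    exacts [hρeq j m n h, hρne j m n h]
  simp_rw [ContinuousLinearMap.sub_comp, ContinuousLinearMap.comp_sub,
    ContinuousLinearMap.finsetSum_comp, ContinuousLinearMap.comp_finsetSum, hdiag,
    Finset.sum_ite_eq]
  split_ifs <;> simp

theorem proj_comp_tail_comp_proj {c : E →L[ℂ] E}
    (hcomm : ∀ m n : ℤ,
      (P m).comp (c.comp (P n)) = ((m - n : ℤ) : ℂ) • ((P m).comp (a.comp (P n))))
    (hρeq : ∀ j m n : ℤ, m - n = j → (P m).comp ((ρ j).comp (P n)) = (P m).comp (a.comp (P n)))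
    (hρne : ∀ j m n : ℤ, m - n ≠ j → (P m).comp ((ρ j).comp (P n)) = 0) (k : ℕ) (m n : ℤ) :
    (P m).comp ((a - ∑ j ∈ Finset.Icc (-(k : ℤ)) k, ρ j).comp (P n))
      = tailCoeff k (m - n) • (P m).comp (c.comp (P n)) := by
  rw [proj_comp_sub_sum_comp_proj hρeq hρne, hcomm, tailCoeff]
  simp only [Finset.mem_Icc, ← abs_le]
  split_ifs with hband htail
  · omega
  · rw [zero_smul]
  · have hmn : ((m - n : ℤ) : ℂ) ≠ 0 := Int.cast_ne_zero.mpr (abs_pos.mp (by omega))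
    rw [smul_smul, inv_mul_cancel₀ hmn, one_smul]
  · omega

end Diagonals

/-- If `[D, a]` is bounded of norm at most `1` for the diagonal operator
`D = ∑ m P_m` over `ℤ`, then the tails of the diagonal expansion of `a` satisfy
`‖a − ∑_{|j| ≤ k} ρ_j(a)‖ ≤ √(2/k)` for every `k ≥ 1`. -/
theorem norm_diagonal_tail_le
    (H : Type*) [NormedAddCommGroup H] [InnerProductSpace ℂ H] [CompleteSpace H]
    (P : ℤ → H →L[ℂ] H)
    (hPsa : ∀ m, IsSelfAdjoint (P m))
    (hPidem : ∀ m, (P m).comp (P m) = P m)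
    (hPorth : ∀ m n : ℤ, m ≠ n → (P m).comp (P n) = 0)
    (hPsum : ∀ v : H, HasSum (fun m => P m v) v)
    (a c : H →L[ℂ] H) (hc : ‖c‖ ≤ 1)
    (hcomm : ∀ m n : ℤ,
      (P m).comp (c.comp (P n)) = ((m - n : ℤ) : ℂ) • ((P m).comp (a.comp (P n))))
    (ρ : ℤ → H →L[ℂ] H)
    (hρeq : ∀ j m n : ℤ, m - n = j →
      (P m).comp ((ρ j).comp (P n)) = (P m).comp (a.comp (P n)))
    (hρne : ∀ j m n : ℤ, m - n ≠ j → (P m).comp ((ρ j).comp (P n)) = 0) :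
    ∀ k : ℤ, 1 ≤ k →
      ‖a - ∑ j ∈ Finset.Icc (-k) k, ρ j‖ ≤ Real.sqrt (2 / (k : ℝ)) := by
  intro k hk
  lift k to ℕ using (by omega)
  have hbound := norm_le_sqrt_of_proj_comp_eq_smul (fun m => ⟨hPidem m, hPsa m⟩)
    (fun m n h => hPorth m n h) hPsum hc (fun n s => sum_norm_sq_tailCoeff_sub_le (by omega) n s)
    (proj_comp_tail_comp_proj hcomm hρeq hρne k)
  simpa using hbound
end

section
/- Let G be a discrete group, ℓ : G → ℕ a length function, and C > 0, s > 0 constants such that the rapid decay inequality ‖λ(x)‖ ≤ C·(∑_{g∈G} (1+ℓ(g))^{2s} |x(g)|²)^{1/2} holds for every finitely supported x : G → ℂ. Let k be a natural number with k > s. Then for every finitely supported a : G → ℂ with ∑_{g∈G} ℓ(g)^{2k} |a(g)|² ≤ 1 and every integer n ≥ 1, the truncation a_n of a to {g : ℓ(g) ≥ n} satisfies ‖λ(a_n)‖ ≤ C · 2^s · n^{s−k}. -/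
/-- For a group `G` of rapid decay (with constants `C, s` relative to
the length function `ℓ`), if `k > s` is a natural number and `a` is finitely supported
with `∑ ℓ(g)^{2k} |a(g)|² ≤ 1`, then the truncation of `a` to `{g : ℓ(g) ≥ n}` has
convolution-operator norm at most `C · 2^s · n^{s−k}` for every `n ≥ 1`. -/
theorem rapid_decay_truncation_estimate
    (G : Type*) [Group G]
    (ℓ : G → ℕ) (he : ℓ 1 = 0)
    (hsub : ∀ g h : G, ℓ (g * h) ≤ ℓ g + ℓ h) (hinv : ∀ g : G, ℓ g⁻¹ = ℓ g)
    (C s : ℝ) (hC : 0 < C) (hs : 0 < s)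
    (hRD : ∀ x : G → ℂ, (Function.support x).Finite →
      ∀ T : lp (fun _ : G => ℂ) 2 →L[ℂ] lp (fun _ : G => ℂ) 2,
        (∀ (ξ : lp (fun _ : G => ℂ) 2) (k : G), T ξ k = ∑ᶠ g, x g * ξ (g⁻¹ * k)) →
        ‖T‖ ≤ C * Real.sqrt (∑ᶠ g, (1 + (ℓ g : ℝ)) ^ (2 * s) * ‖x g‖ ^ 2))
    (k : ℕ) (hk : s < (k : ℝ))
    (a : G → ℂ) (ha : (Function.support a).Finite)
    (hanorm : ∑ᶠ g, (ℓ g : ℝ) ^ (2 * k) * ‖a g‖ ^ 2 ≤ 1)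
    (n : ℕ) (hn : 1 ≤ n)
    (T : lp (fun _ : G => ℂ) 2 →L[ℂ] lp (fun _ : G => ℂ) 2)
    (hT : ∀ (ξ : lp (fun _ : G => ℂ) 2) (m : G),
      T ξ m = ∑ᶠ g, (if n ≤ ℓ g then a g else 0) * ξ (g⁻¹ * m)) :
    ‖T‖ ≤ C * 2 ^ s * (n : ℝ) ^ (s - (k : ℝ)) := by
  classical
  set x : G → ℂ := fun g => if n ≤ ℓ g then a g else 0 with hx
  have hxsupp : Function.support x ⊆ Function.support a := by
    intro g hg
    simp only [Function.mem_support, hx] at hg ⊢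
    intro h; apply hg; split_ifs <;> simp [h]
  have hxfin : (Function.support x).Finite := ha.subset hxsupp
  have h1 := hRD x hxfin T hT
  refine h1.trans ?_
  have hB : (0:ℝ) ≤ 2 ^ s * (n : ℝ) ^ (s - (k : ℝ)) :=
    mul_nonneg (Real.rpow_nonneg (by norm_num) _) (Real.rpow_nonneg (by positivity) _)
  rw [mul_assoc]
  refine mul_le_mul_of_nonneg_left ?_ hC.le
  -- reduce to sum bound
  have hsq : (2:ℝ) ^ s * (n : ℝ) ^ (s - (k : ℝ))
      = Real.sqrt ((2:ℝ) ^ (2*s) * (n : ℝ) ^ (2*(s - (k : ℝ)))) := by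
    rw [show (2:ℝ)*s = s + s by ring, show 2*(s-(k:ℝ)) = (s-(k:ℝ)) + (s-(k:ℝ)) by ring,
      Real.rpow_add (by norm_num), Real.rpow_add (by positivity : (0:ℝ) < n)]
    rw [show (2:ℝ)^s * 2^s * ((n:ℝ)^(s-(k:ℝ)) * (n:ℝ)^(s-(k:ℝ)))
        = (2^s * (n:ℝ)^(s-(k:ℝ)))^2 by ring, Real.sqrt_sq hB]
  rw [hsq]
  apply Real.sqrt_le_sqrt
  -- convert finsums to finset sums
  have hnpos : (0:ℝ) < n := by positivity
  have hsum1 : ∑ᶠ g, (1 + (ℓ g : ℝ)) ^ (2 * s) * ‖x g‖ ^ 2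
      = ∑ g ∈ ha.toFinset, (1 + (ℓ g : ℝ)) ^ (2 * s) * ‖x g‖ ^ 2 := by
    apply finsum_eq_finset_sum_of_support_subset
    intro g hg
    simp only [Function.mem_support] at hg
    have : x g ≠ 0 := by
      intro h; apply hg; simp [h]
    simpa using hxsupp this
  have hsum2 : ∑ᶠ g, (ℓ g : ℝ) ^ (2 * k) * ‖a g‖ ^ 2
      = ∑ g ∈ ha.toFinset, (ℓ g : ℝ) ^ (2 * k) * ‖a g‖ ^ 2 := by
    apply finsum_eq_finset_sum_of_support_subset
    intro g hg
    simp only [Function.mem_support] at hg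
    have : a g ≠ 0 := by
      intro h; apply hg; simp [h]
    simpa using this
  rw [hsum1]
  calc ∑ g ∈ ha.toFinset, (1 + (ℓ g : ℝ)) ^ (2 * s) * ‖x g‖ ^ 2
      ≤ ∑ g ∈ ha.toFinset, (2:ℝ)^(2*s) * (n:ℝ)^(2*(s-(k:ℝ))) * ((ℓ g : ℝ) ^ (2 * k) * ‖a g‖ ^ 2) := by
        apply Finset.sum_le_sum
        intro g _
        by_cases hg : n ≤ ℓ g
        · have hxg : x g = a g := by simp [hx, hg]
          have hℓ1 : (1:ℝ) ≤ (ℓ g : ℝ) := by exact_mod_cast le_trans hn hg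
          have hℓpos : (0:ℝ) < (ℓ g : ℝ) := lt_of_lt_of_le zero_lt_one hℓ1
          have hnℓ : (n:ℝ) ≤ (ℓ g : ℝ) := by exact_mod_cast hg
          rw [hxg, ← mul_assoc]
          apply mul_le_mul_of_nonneg_right _ (sq_nonneg _)
          calc (1 + (ℓ g : ℝ)) ^ (2 * s)
              ≤ (2 * (ℓ g : ℝ)) ^ (2 * s) := by
                apply Real.rpow_le_rpow (by positivity) (by linarith) (by positivity)
            _ = (2:ℝ)^(2*s) * (ℓ g : ℝ) ^ (2*s) :=
                Real.mul_rpow (by norm_num) (by positivity)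
            _ ≤ (2:ℝ)^(2*s) * ((n:ℝ)^(2*(s-(k:ℝ))) * (ℓ g : ℝ) ^ (2*k)) := by
                apply mul_le_mul_of_nonneg_left _ (Real.rpow_nonneg (by norm_num) _)
                have : (ℓ g : ℝ) ^ (2*s) = (ℓ g : ℝ) ^ (2*(s-(k:ℝ))) * (ℓ g : ℝ) ^ ((2*k : ℕ) : ℝ) := by
                  rw [← Real.rpow_add hℓpos]
                  congr 1
                  push_cast; ring
                rw [this, Real.rpow_natCast]
                apply mul_le_mul_of_nonneg_right _ (by positivity)
                exact Real.rpow_le_rpow_of_nonpos hnpos hnℓ (by nlinarith)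
            _ = (2:ℝ)^(2*s) * (n:ℝ)^(2*(s-(k:ℝ))) * (ℓ g : ℝ) ^ (2*k) := by ring
        · have hxg : x g = 0 := by simp [hx, hg]
          rw [hxg, norm_zero, zero_pow two_ne_zero, mul_zero]
          positivity
    _ = (2:ℝ)^(2*s) * (n:ℝ)^(2*(s-(k:ℝ))) * ∑ g ∈ ha.toFinset, (ℓ g : ℝ) ^ (2 * k) * ‖a g‖ ^ 2 := by
        rw [Finset.mul_sum]
    _ ≤ (2:ℝ)^(2*s) * (n:ℝ)^(2*(s-(k:ℝ))) * 1 := by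
        apply mul_le_mul_of_nonneg_left _ (by positivity)
        rw [← hsum2]; exact hanorm
    _ = (2:ℝ)^(2*s) * (n:ℝ)^(2*(s-(k:ℝ))) := mul_one _
end

section
/- Let A be a unital C*-algebra and K ⊆ A a metric set (norm compact, convex, balanced, and separating the states of A), and set d_K(φ,ψ) = sup_{k∈K} |φ(k) − ψ(k)| for states φ, ψ. Let H ⊆ A be norm bounded and suppose that for every ε > 0 there exists N > 0 with H ⊆ A_ε + N·K + ℂ·1 (where A_ε is the closed ε-ball of A). Then the family H is uniformly equicontinuous on the state space with respect to d_K: for every ε > 0 there exists δ > 0 such that for all h ∈ H and all states φ, ψ with d_K(φ,ψ) < δ one has |φ(h) − ψ(h)| ≤ ε. -/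
open scoped Pointwise

/-- A state on a unital C*-algebra: a continuous linear functional with `φ(1) = 1` and
`φ(a*a)` real and nonnegative for every `a`. -/
def IsStateCLM {A : Type*} [NormedRing A] [NormedAlgebra ℂ A] [StarRing A]
    (φ : A →L[ℂ] ℂ) : Prop :=
  φ 1 = 1 ∧ ∀ a : A, 0 ≤ (φ (star a * a)).re ∧ (φ (star a * a)).im = 0

/-!
States have norm at most one: positivity of `‖h‖ • 1 - h` makes a state real and at most `‖h‖`
on a self-adjoint `h`, and rotating `a` by a phase reduces `|φ a|` to the real part of `a`.
Writing `h = a + N • k + μ • 1` with `‖a‖ ≤ ε / 4`, the scalar term cancels in `φ h - ψ h`, so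
`|φ h - ψ h| ≤ 2 ‖a‖ + N d_K(φ, ψ)`, and `δ = ε / (2 N)` works.
-/

open scoped ComplexStarModule ComplexOrder

lemma LinearMap.norm_apply_le_of_forall_re_apply_le {𝕜 E : Type*} [RCLike 𝕜]
    [SeminormedAddCommGroup E] [NormedSpace 𝕜 E] (f : E →ₗ[𝕜] 𝕜)
    (hf : ∀ b, RCLike.re (f b) ≤ ‖b‖) (a : E) : ‖f a‖ ≤ ‖a‖ := by
  obtain h0 | h0 := eq_or_ne (f a) 0
  · simp [h0]
  set u : 𝕜 := starRingEnd 𝕜 (f a) / ‖f a‖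
  have hu : ‖u‖ = 1 := by simp [u, h0]
  have hfu : f (u • a) = ‖f a‖ := by
    rw [map_smul, smul_eq_mul, div_mul_eq_mul_div, RCLike.conj_mul]
    field_simp [h0]
  calc ‖f a‖ = RCLike.re (f (u • a)) := by simp [hfu]
    _ ≤ ‖u • a‖ := hf _
    _ = ‖a‖ := by rw [norm_smul, hu, one_mul]

namespace IsStateCLM

variable {A : Type*} [CStarAlgebra A] {φ ψ : A →L[ℂ] ℂ}

lemma apply_nonneg [PartialOrder A] [StarOrderedRing A] (hφ : IsStateCLM φ) {x : A}
    (hx : 0 ≤ x) : 0 ≤ φ x := by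
  obtain ⟨s, rfl⟩ := CStarAlgebra.nonneg_iff_eq_star_mul_self.mp hx
  exact Complex.nonneg_iff.mpr ⟨(hφ.2 s).1, (hφ.2 s).2.symm⟩

lemma apply_algebraMap (hφ : IsStateCLM φ) (r : ℝ) : φ (algebraMap ℝ A r) = r := by
  rw [Algebra.algebraMap_eq_smul_one, ← Complex.coe_smul, map_smul, hφ.1, smul_eq_mul,
    mul_one]

lemma apply_le_norm_of_isSelfAdjoint [PartialOrder A] [StarOrderedRing A]
    (hφ : IsStateCLM φ) {h : A} (hh : IsSelfAdjoint h) : φ h ≤ ‖h‖ := by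
  have := hφ.apply_nonneg (sub_nonneg.mpr hh.le_algebraMap_norm_self)
  rwa [map_sub, hφ.apply_algebraMap, sub_nonneg] at this

lemma re_apply_le_norm (hφ : IsStateCLM φ) (a : A) : (φ a).re ≤ ‖a‖ := by
  let _ : PartialOrder A := CStarAlgebra.spectralOrder A
  have _ : StarOrderedRing A := CStarAlgebra.spectralOrderedRing A
  have hre := Complex.le_def.mp (hφ.apply_le_norm_of_isSelfAdjoint (ℜ a).2)
  have him := Complex.le_def.mp (hφ.apply_le_norm_of_isSelfAdjoint (ℑ a).2)
  calc (φ a).re = (φ (ℜ a)).re := by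
        conv_lhs => rw [← realPart_add_I_smul_imaginaryPart a]
        simp [him.2]
    _ ≤ ‖(ℜ a : A)‖ := by simpa using hre.1
    _ ≤ ‖a‖ := realPart.norm_le a

lemma norm_apply_le (hφ : IsStateCLM φ) (a : A) : ‖φ a‖ ≤ ‖a‖ :=
  LinearMap.norm_apply_le_of_forall_re_apply_le φ.toLinearMap hφ.re_apply_le_norm a

lemma norm_sub_apply_le (hφ : IsStateCLM φ) (hψ : IsStateCLM ψ) (a : A) :
    ‖φ a - ψ a‖ ≤ 2 * ‖a‖ := by
  linarith [norm_sub_le (φ a) (ψ a), hφ.norm_apply_le a, hψ.norm_apply_le a]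

lemma bddAbove_range_norm_sub_apply (hφ : IsStateCLM φ) (hψ : IsStateCLM ψ)
    {K : Set A} (hK : Bornology.IsBounded K) :
    BddAbove (Set.range fun k : K ↦ ‖φ k - ψ k‖) := by
  obtain ⟨C, hC⟩ := hK.subset_closedBall 0
  refine ⟨2 * C, Set.forall_mem_range.mpr fun k ↦ ?_⟩
  have hk : ‖(k : A)‖ ≤ C := by simpa using hC k.2
  linarith [hφ.norm_sub_apply_le hψ k]

lemma norm_sub_apply_le_of_mem_closedBall_add_smul_add_range (hφ : IsStateCLM φ)
    (hψ : IsStateCLM ψ) {K : Set A} (hK : Bornology.IsBounded K) {r N : ℝ} (hN : 0 ≤ N) {h : A}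
    (hh : h ∈ Metric.closedBall (0 : A) r + (N : ℂ) • K + Set.range (fun μ : ℂ ↦ μ • (1 : A))) :
    ‖φ h - ψ h‖ ≤ 2 * r + N * ⨆ k : K, ‖φ k - ψ k‖ := by
  obtain ⟨_, ⟨a, ha, _, ⟨k, hk, rfl⟩, rfl⟩, _, ⟨μ, rfl⟩, rfl⟩ := hh
  have hφψ : φ (a + (N : ℂ) • k + μ • 1) - ψ (a + (N : ℂ) • k + μ • 1)
      = (φ a - ψ a) + N * (φ k - ψ k) := by
    simp only [map_add, map_smul, hφ.1, hψ.1, smul_eq_mul]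
    ring
  have ha : ‖a‖ ≤ r := by simpa using ha
  have hkd : ‖φ k - ψ k‖ ≤ ⨆ k : K, ‖φ k - ψ k‖ :=
    le_ciSup (hφ.bddAbove_range_norm_sub_apply hψ hK) ⟨k, hk⟩
  calc _ ≤ ‖φ a - ψ a‖ + N * ‖φ k - ψ k‖ := by
        rw [hφψ]
        refine (norm_add_le _ _).trans_eq ?_
        rw [norm_mul, Complex.norm_of_nonneg hN]
    _ ≤ 2 * r + N * ⨆ k : K, ‖φ k - ψ k‖ := by
        gcongr
        exact (hφ.norm_sub_apply_le hψ a).trans (by linarith)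

end IsStateCLM

theorem equicontinuous_of_approximation_by_metric_set_general
    (A : Type*) [NormedRing A] [StarRing A] [CStarRing A] [CompleteSpace A]
    [NormedAlgebra ℂ A] [StarModule ℂ A]
    (K : Set A) (hKcpt : IsCompact K)
    (H : Set A)
    (hHincl : ∀ ε : ℝ, 0 < ε → ∃ N : ℝ, 0 < N ∧
      H ⊆ Metric.closedBall (0 : A) ε + (N : ℂ) • K +
        Set.range (fun μ : ℂ => μ • (1 : A))) :
    ∀ ε : ℝ, 0 < ε → ∃ δ : ℝ, 0 < δ ∧
      ∀ h ∈ H, ∀ φ ψ : A →L[ℂ] ℂ, IsStateCLM φ → IsStateCLM ψ →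
        (⨆ k : K, ‖φ (k : A) - ψ (k : A)‖) < δ →
        ‖φ h - ψ h‖ ≤ ε := by
  let _ : CStarAlgebra A := {}
  intro ε hε
  obtain ⟨N, hN, hHN⟩ := hHincl (ε / 4) (by positivity)
  refine ⟨ε / (2 * N), by positivity, fun h hh φ ψ hφ hψ hδ ↦ ?_⟩
  have hNd : N * ⨆ k : K, ‖φ k - ψ k‖ ≤ ε / 2 := by
    calc N * ⨆ k : K, ‖φ k - ψ k‖ ≤ N * (ε / (2 * N)) := by gcongr
      _ = ε / 2 := by field_simp
  linarith [hφ.norm_sub_apply_le_of_mem_closedBall_add_smul_add_range hψ hKcpt.isBounded hN.le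
    (hHN hh)]

/-- Let `K` be a metric set in a unital C*-algebra `A` and let
`d_K(φ,ψ) = sup_{k ∈ K} |φ(k) − ψ(k)|`. If `H ⊆ A` is norm bounded and for every `ε > 0`
there is `N > 0` with `H ⊆ A_ε + N·K + ℂ·1`, then the family `H` is uniformly
equicontinuous on the state space with respect to `d_K`. -/
theorem equicontinuous_of_approximation_by_metric_set
    (A : Type*) [NormedRing A] [StarRing A] [CStarRing A] [CompleteSpace A]
    [NormedAlgebra ℂ A] [StarModule ℂ A]
    (K : Set A) (hKcpt : IsCompact K) (hKconv : Convex ℝ K) (hKbal : Balanced ℂ K)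
    (hKsep : ∀ φ ψ : A →L[ℂ] ℂ, IsStateCLM φ → IsStateCLM ψ →
      (∀ k ∈ K, φ k = ψ k) → φ = ψ)
    (H : Set A) (hHbdd : Bornology.IsBounded H)
    (hHincl : ∀ ε : ℝ, 0 < ε → ∃ N : ℝ, 0 < N ∧
      H ⊆ Metric.closedBall (0 : A) ε + (N : ℂ) • K +
        Set.range (fun μ : ℂ => μ • (1 : A))) :
    ∀ ε : ℝ, 0 < ε → ∃ δ : ℝ, 0 < δ ∧
      ∀ h ∈ H, ∀ φ ψ : A →L[ℂ] ℂ, IsStateCLM φ → IsStateCLM ψ →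
        (⨆ k : K, ‖φ (k : A) - ψ (k : A)‖) < δ →
        ‖φ h - ψ h‖ ≤ ε :=
  equicontinuous_of_approximation_by_metric_set_general A K hKcpt H hHincl
end
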